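/- Let C be an algebraically ordered compact cone and let f, g ∈ Lsc(C). Consider the statements: (i) there exists g' ∈ Lsc(C) with f ≤ g' ⊴ g; (ii) the topological closure of set(f) = {λ ∈ C : f(λ) > 1} is contained in set(g) = {λ ∈ C : g(λ) > 1}; (iii) f is non-sequentially way-below g in Lsc(C), that is, whenever (h_α) is an increasing net in Lsc(C) whose pointwise supremum h satisfies g ≤ h, there exists α with f ≤ h_α; (iv) f is sequentially way-below g in Lsc(C), that is, whenever (h_n) is an increasing sequence in Lsc(C) whose pointwise supremum h satisfies g ≤ h, there exists n with f ≤ h_n. Then (i) implies (ii), (ii) implies (iii), and (iii) implies (iv); moreover, if g ∈ LL(C), then (iv) implies (i), so all four statements are equivalent. -/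

import Mathlib

/-!
(i) ⇒ (ii): where `g ≤ 1` is finite, `g' ≤ (1 - ε) g < 1` and `g'` is continuous, so `f ≤ g' < 1`
on a whole neighbourhood, which therefore misses `set(f)`.
(ii) ⇒ (iii): the closure of `set(f)` is compact and covered by the increasing open sets
`{1 < h_α}`, so a single `h_α` exceeds `1` on all of `set(f)`; by homogeneity this inclusion of
level sets already gives `f ≤ h_α`.
(iv) ⇒ (i): apply (iv) to a `⊴`-chain with supremum `g`; the member that dominates `f` is `⊴ g`.
-/

open scoped ENNReal

universe u v

section ConePreamble

variable {C : Type u} [AddCommMonoid C] [TopologicalSpace C]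

/-- An algebraically ordered compact cone: a commutative monoid with a compatible
scalar multiplication `sm` by `(0,∞)`, jointly continuous operations, and an
antisymmetric algebraic pre-order. Compactness and Hausdorffness are carried
by the instance hypotheses. -/
structure IsAOCompactCone (C : Type u) [AddCommMonoid C] [TopologicalSpace C]
    [CompactSpace C] [T2Space C] (sm : ℝ → C → C) : Prop where
  continuous_add : Continuous fun p : C × C => p.1 + p.2
  continuous_smul : ContinuousOn (fun p : ℝ × C => sm p.1 p.2)
    (Set.Ioi (0 : ℝ) ×ˢ (Set.univ : Set C))
  smul_add : ∀ t : ℝ, 0 < t → ∀ x y : C, sm t (x + y) = sm t x + sm t y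
  add_smul : ∀ s t : ℝ, 0 < s → 0 < t → ∀ x : C, sm (s + t) x = sm s x + sm t x
  mul_smul : ∀ s t : ℝ, 0 < s → 0 < t → ∀ x : C, sm (s * t) x = sm s (sm t x)
  one_smul : ∀ x : C, sm 1 x = x
  smul_zero : ∀ t : ℝ, 0 < t → sm t 0 = 0
  alg_antisymm : ∀ x y : C, (∃ v : C, x + v = y) → (∃ w : C, y + w = x) → x = y

/-- Membership in `Lsc(C)`: a lower semicontinuous, additive, `(0,∞)`-homogeneous,
zero-preserving map `C → [0,∞]`. -/
structure IsLscFun (sm : ℝ → C → C) (h : C → ℝ≥0∞) : Prop where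
  lsc : LowerSemicontinuous h
  map_zero : h 0 = 0
  map_add : ∀ x y : C, h (x + y) = h x + h y
  map_smul : ∀ t : ℝ, 0 < t → ∀ x : C, h (sm t x) = ENNReal.ofReal t * h x

/-- The relation `f ⊴ g`. -/
def TriRel (f g : C → ℝ≥0∞) : Prop :=
  ∃ ε : ℝ, 0 < ε ∧ (∀ x : C, f x ≤ ENNReal.ofReal (1 - ε) * g x) ∧
    ∀ x : C, g x < ⊤ → ContinuousAt f x

/-- Membership in `LL(C)`: pointwise suprema of `⊴`-increasing sequences in `Lsc(C)`. -/
def MemLL (sm : ℝ → C → C) (f : C → ℝ≥0∞) : Prop :=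
  ∃ g : ℕ → C → ℝ≥0∞, (∀ n, IsLscFun sm (g n)) ∧ (∀ n, TriRel (g n) (g (n + 1))) ∧
    ∀ x : C, f x = ⨆ n, g n x

end ConePreamble

open Topology

def IsPosHomogeneous {C : Type u} (sm : ℝ → C → C) (f : C → ℝ≥0∞) : Prop :=
  ∀ t : ℝ, 0 < t → ∀ x, f (sm t x) = ENNReal.ofReal t * f x

theorem le_of_one_lt_imp_one_lt {C : Type u} {sm : ℝ → C → C} {f h : C → ℝ≥0∞}
    (hf : IsPosHomogeneous sm f) (hh : IsPosHomogeneous sm h)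
    (H : ∀ x, 1 < f x → 1 < h x) (x : C) : f x ≤ h x := by
  by_contra! hlt
  obtain ⟨c, hhc, hcf⟩ := exists_between hlt
  have hc0 : c ≠ 0 := (hhc.trans_le' zero_le).ne'
  have hctop : c ≠ ⊤ := hcf.ne_top
  -- rescaling by `t = 1 / c` moves `x` into `{1 < f}` but keeps it out of `{1 < h}`
  set t := c.toReal⁻¹
  have ht : 0 < t := inv_pos.2 (ENNReal.toReal_pos hc0 hctop)
  have htc : ENNReal.ofReal t * c = 1 := by
    rw [ENNReal.ofReal_inv_of_pos (ENNReal.toReal_pos hc0 hctop), ENNReal.ofReal_toReal hctop,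
      ENNReal.inv_mul_cancel hc0 hctop]
  have ht0 : ENNReal.ofReal t ≠ 0 := (ENNReal.ofReal_pos.2 ht).ne'
  have hscaled := H (sm t x) (by
    rw [hf t ht, ← htc]; exact (ENNReal.mul_lt_mul_iff_right ht0 ENNReal.ofReal_ne_top).2 hcf)
  rw [hh t ht, ← htc] at hscaled
  exact ((ENNReal.mul_lt_mul_iff_right ht0 ENNReal.ofReal_ne_top).1 hscaled).not_gt hhc

section

variable {C : Type u} [TopologicalSpace C]

def WayBelow [AddCommMonoid C] (sm : ℝ → C → C) (f g : C → ℝ≥0∞) : Prop :=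
  ∀ (ι : Type v) [Preorder ι] [Nonempty ι],
    (∀ a b : ι, ∃ c : ι, a ≤ c ∧ b ≤ c) →
    ∀ h : ι → C → ℝ≥0∞, (∀ i, IsLscFun sm (h i)) →
      (∀ i i' : ι, i ≤ i' → ∀ x, h i x ≤ h i' x) →
      (∀ x, g x ≤ ⨆ i, h i x) → ∃ i, ∀ x, f x ≤ h i x

def SeqWayBelow [AddCommMonoid C] (sm : ℝ → C → C) (f g : C → ℝ≥0∞) : Prop :=
  ∀ h : ℕ → C → ℝ≥0∞, (∀ n, IsLscFun sm (h n)) →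
    (∀ n n' : ℕ, n ≤ n' → ∀ x, h n x ≤ h n' x) →
    (∀ x, g x ≤ ⨆ n, h n x) → ∃ n, ∀ x, f x ≤ h n x

theorem TriRel.le {f g : C → ℝ≥0∞} (hfg : TriRel f g) (x : C) : f x ≤ g x := by
  obtain ⟨ε, hε, hle, -⟩ := hfg
  calc f x ≤ ENNReal.ofReal (1 - ε) * g x := hle x
    _ ≤ 1 * g x := by gcongr; exact ENNReal.ofReal_le_one.2 (by linarith)
    _ = g x := one_mul _

theorem TriRel.mono_right {f g g' : C → ℝ≥0∞} (hfg : TriRel f g) (hgg' : ∀ x, g x ≤ g' x) :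
    TriRel f g' := by
  obtain ⟨ε, hε, hle, hcont⟩ := hfg
  exact ⟨ε, hε, fun x => (hle x).trans (by gcongr; exact hgg' x),
    fun x hx => hcont x ((hgg' x).trans_lt hx)⟩

theorem closure_setOf_one_lt_subset {f g' g : C → ℝ≥0∞} (hfg' : ∀ x, f x ≤ g' x)
    (hg'g : TriRel g' g) : closure {x | 1 < f x} ⊆ {x | 1 < g x} := by
  obtain ⟨ε, hε, hle, hcont⟩ := hg'g
  intro x hx
  by_contra hgx
  replace hgx : g x ≤ 1 := not_lt.1 hgx
  have hg'x : g' x < 1 :=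
    calc g' x ≤ ENNReal.ofReal (1 - ε) * g x := hle x
      _ ≤ ENNReal.ofReal (1 - ε) * 1 := by gcongr
      _ < 1 := by rw [mul_one]; exact ENNReal.ofReal_lt_one.2 (by linarith)
  have hnhds : {y | g' y < 1} ∈ 𝓝 x :=
    (hcont x (hgx.trans_lt ENNReal.one_lt_top)).preimage_mem_nhds (Iio_mem_nhds hg'x)
  obtain ⟨y, hy, hfy⟩ := mem_closure_iff_nhds.1 hx _ hnhds
  exact (hfy.trans_le (hfg' y)).not_gt hy

variable [AddCommMonoid C] {sm : ℝ → C → C} {f g : C → ℝ≥0∞}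

theorem wayBelow_of_closure_subset [CompactSpace C] (hf : IsPosHomogeneous sm f)
    (hfg : closure {x | 1 < f x} ⊆ {x | 1 < g x}) : WayBelow.{u, v} sm f g := by
  intro ι _ _ hdir h hh hmono hsup
  have hopen : ∀ i, IsOpen {x | 1 < h i x} := fun i => (hh i).lsc.isOpen_preimage 1
  have hcover : closure {x | 1 < f x} ⊆ ⋃ i, {x | 1 < h i x} := fun x hx =>
    Set.mem_iUnion.2 (lt_iSup_iff.1 ((hfg hx).trans_le (hsup x)))
  have hdirected : Directed (· ⊆ ·) fun i => {x | 1 < h i x} := fun a b =>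
    let ⟨c, hac, hbc⟩ := hdir a b
    ⟨c, fun x hx => hx.trans_le (hmono a c hac x), fun x hx => hx.trans_le (hmono b c hbc x)⟩
  obtain ⟨i, hi⟩ := isClosed_closure.isCompact.elim_directed_cover _ hopen hcover hdirected
  exact ⟨i, le_of_one_lt_imp_one_lt hf (hh i).map_smul fun x hx => hi (subset_closure hx)⟩

theorem WayBelow.seqWayBelow (hfg : WayBelow.{u, v} sm f g) : SeqWayBelow sm f g := by
  intro h hh hmono hsup
  obtain ⟨⟨n⟩, hn⟩ := hfg (ULift.{v} ℕ)
    (fun a b => ⟨⟨max a.down b.down⟩, le_max_left _ _, le_max_right _ _⟩)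
    (fun i => h i.down) (fun i => hh i.down) (fun i i' hii' => hmono i.down i'.down hii')
    (fun x => (hsup x).trans (iSup_le fun n => le_iSup_of_le ⟨n⟩ le_rfl))
  exact ⟨n, hn⟩

theorem SeqWayBelow.exists_triRel (hg : MemLL sm g) (hfg : SeqWayBelow sm f g) :
    ∃ g', IsLscFun sm g' ∧ (∀ x, f x ≤ g' x) ∧ TriRel g' g := by
  obtain ⟨G, hG, hGtri, hGsup⟩ := hg
  have hGmono : Monotone G := monotone_nat_of_le_succ fun n => (hGtri n).le
  have hGg : ∀ n x, G n x ≤ g x := fun n x => (hGsup x).symm ▸ le_iSup (fun k => G k x) n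
  obtain ⟨n, hn⟩ := hfg G hG (fun n n' hnn' => hGmono hnn') (fun x => (hGsup x).le)
  exact ⟨G n, hG n, hn, (hGtri n).mono_right (hGg (n + 1))⟩

end

theorem stmt_16_general {C : Type u} [AddCommMonoid C] [TopologicalSpace C]
    [CompactSpace C] (sm : ℝ → C → C)
    (f g : C → ℝ≥0∞) (hf : IsLscFun sm f) :
    (((∃ g' : C → ℝ≥0∞, IsLscFun sm g' ∧ (∀ x, f x ≤ g' x) ∧ TriRel g' g) →
        closure {x : C | 1 < f x} ⊆ {x : C | 1 < g x}) ∧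
      ((closure {x : C | 1 < f x} ⊆ {x : C | 1 < g x}) →
        ∀ (ι : Type v) [Preorder ι] [Nonempty ι],
          (∀ a b : ι, ∃ c : ι, a ≤ c ∧ b ≤ c) →
          ∀ h : ι → C → ℝ≥0∞, (∀ i, IsLscFun sm (h i)) →
            (∀ i i' : ι, i ≤ i' → ∀ x, h i x ≤ h i' x) →
            (∀ x, g x ≤ ⨆ i, h i x) → ∃ i, ∀ x, f x ≤ h i x) ∧
      ((∀ (ι : Type v) [Preorder ι] [Nonempty ι],
          (∀ a b : ι, ∃ c : ι, a ≤ c ∧ b ≤ c) →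
          ∀ h : ι → C → ℝ≥0∞, (∀ i, IsLscFun sm (h i)) →
            (∀ i i' : ι, i ≤ i' → ∀ x, h i x ≤ h i' x) →
            (∀ x, g x ≤ ⨆ i, h i x) → ∃ i, ∀ x, f x ≤ h i x) →
        ∀ h : ℕ → C → ℝ≥0∞, (∀ n, IsLscFun sm (h n)) →
          (∀ n n' : ℕ, n ≤ n' → ∀ x, h n x ≤ h n' x) →
          (∀ x, g x ≤ ⨆ n, h n x) → ∃ n, ∀ x, f x ≤ h n x)) ∧
    (MemLL sm g →
      ((∀ h : ℕ → C → ℝ≥0∞, (∀ n, IsLscFun sm (h n)) →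
          (∀ n n' : ℕ, n ≤ n' → ∀ x, h n x ≤ h n' x) →
          (∀ x, g x ≤ ⨆ n, h n x) → ∃ n, ∀ x, f x ≤ h n x) →
        ∃ g' : C → ℝ≥0∞, IsLscFun sm g' ∧ (∀ x, f x ≤ g' x) ∧ TriRel g' g)) :=
  ⟨⟨fun ⟨_, _, hfg', hg'g⟩ => closure_setOf_one_lt_subset hfg' hg'g,
    wayBelow_of_closure_subset hf.map_smul, WayBelow.seqWayBelow⟩,
    SeqWayBelow.exists_triRel⟩

/-- Implications between the four characterizations of the way-below relation on
`Lsc(C)` for an algebraically ordered compact cone `C`; all four are equivalent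
when `g ∈ LL(C)`. -/
theorem stmt_16 {C : Type u} [AddCommMonoid C] [TopologicalSpace C]
    [CompactSpace C] [T2Space C] (sm : ℝ → C → C)
    (hC : IsAOCompactCone C sm)
    (f g : C → ℝ≥0∞) (hf : IsLscFun sm f) (hg : IsLscFun sm g) :
    (((∃ g' : C → ℝ≥0∞, IsLscFun sm g' ∧ (∀ x, f x ≤ g' x) ∧ TriRel g' g) →
        closure {x : C | 1 < f x} ⊆ {x : C | 1 < g x}) ∧
      ((closure {x : C | 1 < f x} ⊆ {x : C | 1 < g x}) →
        ∀ (ι : Type v) [Preorder ι] [Nonempty ι],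
          (∀ a b : ι, ∃ c : ι, a ≤ c ∧ b ≤ c) →
          ∀ h : ι → C → ℝ≥0∞, (∀ i, IsLscFun sm (h i)) →
            (∀ i i' : ι, i ≤ i' → ∀ x, h i x ≤ h i' x) →
            (∀ x, g x ≤ ⨆ i, h i x) → ∃ i, ∀ x, f x ≤ h i x) ∧
      ((∀ (ι : Type v) [Preorder ι] [Nonempty ι],
          (∀ a b : ι, ∃ c : ι, a ≤ c ∧ b ≤ c) →
          ∀ h : ι → C → ℝ≥0∞, (∀ i, IsLscFun sm (h i)) →
            (∀ i i' : ι, i ≤ i' → ∀ x, h i x ≤ h i' x) →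
            (∀ x, g x ≤ ⨆ i, h i x) → ∃ i, ∀ x, f x ≤ h i x) →
        ∀ h : ℕ → C → ℝ≥0∞, (∀ n, IsLscFun sm (h n)) →
          (∀ n n' : ℕ, n ≤ n' → ∀ x, h n x ≤ h n' x) →
          (∀ x, g x ≤ ⨆ n, h n x) → ∃ n, ∀ x, f x ≤ h n x)) ∧
    (MemLL sm g →
      ((∀ h : ℕ → C → ℝ≥0∞, (∀ n, IsLscFun sm (h n)) →
          (∀ n n' : ℕ, n ≤ n' → ∀ x, h n x ≤ h n' x) →
          (∀ x, g x ≤ ⨆ n, h n x) → ∃ n, ∀ x, f x ≤ h n x) →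
        ∃ g' : C → ℝ≥0∞, IsLscFun sm g' ∧ (∀ x, f x ≤ g' x) ∧ TriRel g' g)) :=
  stmt_16_general sm f g hf
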